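/- Geometric decay of the negative part near a Lipschitz graph: There exists a universal constant c₀ ∈ (0,1) such that for every δ ∈ (0, 1/4] the following holds. Let A be uniformly elliptic on C_1 and let w ∈ C²(C_1) satisfy tr(A D²w) = 0 in C_1 and vanish continuously on Γ. If w ≥ −1 on C_1 and w ≥ 0 on C_1 \ C(1, δ), then for every positive integer k with kδ ≤ 1/2 one has w ≥ −(1 − c₀)^k on C_{1−kδ}; in particular w ≥ −(1 − c₀)^{⌊1/(4δ)⌋} on C_{1/2}. -/

import Mathlib

open MeasureTheory Metric Filter

noncomputable section

/-- `ℝ^n` with the Euclidean norm. -/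
abbrev Eucl (n : ℕ) : Type := EuclideanSpace ℝ (Fin n)

/-- Uniform ellipticity of the coefficient matrix `A` on `Ω`:
`λ|ξ|² ≤ ξ·(A(x)ξ)` and `|A(x)ξ| ≤ Λ|ξ|`. -/
def UnifElliptic {n : ℕ} (lam Lam : ℝ) (Ω : Set (Eucl n))
    (A : Eucl n → Matrix (Fin n) (Fin n) ℝ) : Prop :=
  ∀ x ∈ Ω, ∀ ξ : Eucl n,
    lam * ‖ξ‖ ^ 2 ≤ ∑ i, ξ i * ∑ j, A x i j * ξ j ∧
    Real.sqrt (∑ i, (∑ j, A x i j * ξ j) ^ 2) ≤ Lam * ‖ξ‖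

/-- `u` is a `C²` solution of `tr(A D²u) = 0` on the open set `Ω`. -/
def NondivSolution {n : ℕ} (A : Eucl n → Matrix (Fin n) (Fin n) ℝ) (Ω : Set (Eucl n))
    (u : Eucl n → ℝ) : Prop :=
  ContDiffOn ℝ 2 u Ω ∧ ∀ x ∈ Ω,
    ∑ i, ∑ j, A x i j *
      fderiv ℝ (fun y => fderiv ℝ u y (EuclideanSpace.single i 1)) x
        (EuclideanSpace.single j 1) = 0

/-- The first `d` coordinates of a point in `ℝ^{d+1}`. -/
def ehead {d : ℕ} (x : Eucl (d + 1)) : Eucl d := WithLp.toLp 2 (fun i : Fin d => x i.castSucc)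

/-- The last coordinate of a point in `ℝ^{d+1}`. -/
def elast {d : ℕ} (x : Eucl (d + 1)) : ℝ := x (Fin.last d)

/-- `h_Γ(x) = x_n - g(x')`. -/
def hG {d : ℕ} (g : Eucl d → ℝ) (x : Eucl (d + 1)) : ℝ := elast x - g (ehead x)

/-- The cylindrical region `C(r,ρ) = {|x'| < r, 0 < h_Γ(x) < ρ}` above the graph of `g`. -/
def cylC {d : ℕ} (g : Eucl d → ℝ) (r ρ : ℝ) : Set (Eucl (d + 1)) :=
  {x | ‖ehead x‖ < r ∧ 0 < hG g x ∧ hG g x < ρ}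

/-- `u` vanishes continuously on the part of the graph `Γ` with `|x₀'| < r`,
as a function on `Ω`. -/
def VanishesOnGraph {d : ℕ} (g : Eucl d → ℝ) (r : ℝ) (Ω : Set (Eucl (d + 1)))
    (u : Eucl (d + 1) → ℝ) : Prop :=
  ∀ x₀ : Eucl (d + 1), ‖ehead x₀‖ < r → elast x₀ = g (ehead x₀) →
    Tendsto u (nhdsWithin x₀ Ω) (nhds 0)

/-- The point `e_n / 2`. -/
def enHalf (d : ℕ) : Eucl (d + 1) := (1 / 2 : ℝ) • EuclideanSpace.single (Fin.last d) 1

/-!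
The barrier `β(x) = |x - z|^{-p}`, `p = nΛ/λ`, is a strict subsolution of `tr(A D²·) = 0` away
from `z`. By the minimum principle on the annulus `ρ < |x - z| < 4ρ`, where `w → 0` on `Γ`, a lower
bound `w + m ≥ a` on `B_ρ(z)` becomes `w + m ≥ θ a` on `B_{2ρ}(z)` with
`θ = (2^{-p} - 4^{-p}) / (1 - 4^{-p})`. A vertical chain of `N = ⌈10(1 + L)⌉` balls of radius
`δ / (8(1 + L))` connects the region `h_Γ ≥ δ`, where `w ≥ 0`, to any point of the slab
`h_Γ < δ`; hence `w ≥ -m` on `C(r, 1)` gives `w ≥ -(1 - θ^N) m` on `C(r - δ, 1)`, and `k`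
iterations give the bound with `c₀ = θ^N`.
-/

open Set Topology

section SecondOrder

variable {E : Type*} [NormedAddCommGroup E] [NormedSpace ℝ E] {f : E → ℝ} {x : E}

theorem IsLocalMin.nonneg_of_hasDerivAt_of_hasDerivAt {φ φ' : ℝ → ℝ} {t₀ c : ℝ}
    (hmin : IsLocalMin φ t₀) (hφ : ∀ᶠ t in 𝓝 t₀, HasDerivAt φ (φ' t) t)
    (hφ' : HasDerivAt φ' c t₀) : 0 ≤ c := by
  -- if `c < 0`, then `φ' < 0` just right of `t₀`, and by the mean value theorem `φ` drops there
  by_contra! hc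
  have hzero : φ' t₀ = 0 := hmin.hasDerivAt_eq_zero hφ.self_of_nhds
  have hneg : ∀ᶠ t in 𝓝[>] t₀, φ' t < 0 := by
    have hslope := (hasDerivAt_iff_tendsto_slope.mp hφ').mono_left (nhdsGT_le_nhdsNE t₀)
    filter_upwards [hslope.eventually (eventually_lt_nhds hc), self_mem_nhdsWithin]
      with t ht (htt : t₀ < t)
    rw [slope_def_field, hzero, sub_zero] at ht
    simpa using (div_lt_iff₀ (sub_pos.mpr htt)).mp ht
  obtain ⟨b, hb, hsub⟩ := mem_nhdsGT_iff_exists_Ioo_subset.mp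
    (hneg.and (nhdsWithin_le_nhds (hφ.and hmin)))
  have hb' : t₀ < b := hb
  set t := (t₀ + b) / 2
  have ht : t ∈ Ioo t₀ b := ⟨by simp only [t]; linarith, by simp only [t]; linarith⟩
  have hIoo : ∀ s ∈ Ioo t₀ t, s ∈ Ioo t₀ b := fun s hs => ⟨hs.1, hs.2.trans ht.2⟩
  have hcont : ContinuousOn φ (Icc t₀ t) := fun s hs => by
    rcases hs.1.eq_or_lt with rfl | h
    · exact hφ.self_of_nhds.continuousAt.continuousWithinAt
    · exact (hsub ⟨h, hs.2.trans_lt ht.2⟩).2.1.continuousAt.continuousWithinAt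
  obtain ⟨s, hs, hmvt⟩ :=
    exists_hasDerivAt_eq_slope φ φ' ht.1 hcont fun s hs => (hsub (hIoo s hs)).2.1
  have hdrop : (φ t - φ t₀) / (t - t₀) < 0 := hmvt ▸ (hsub (hIoo s hs)).1
  linarith [(div_lt_iff₀ (sub_pos.mpr ht.1)).mp hdrop, (hsub ht).2.2]

theorem IsLocalMin.fderiv_fderiv_apply_self_nonneg (hf : ContDiffAt ℝ 2 f x)
    (hmin : IsLocalMin f x) (ξ : E) : 0 ≤ fderiv ℝ (fderiv ℝ f) x ξ ξ := by
  have hline : ∀ t : ℝ, HasDerivAt (fun t : ℝ => x + t • ξ) ξ t := fun t => by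
    simpa using ((hasDerivAt_id t).smul_const ξ).const_add x
  have hcont : Tendsto (fun t : ℝ => x + t • ξ) (𝓝 0) (𝓝 x) := by
    simpa using (hline 0).continuousAt.tendsto
  have hdiff : ∀ᶠ y in 𝓝 x, DifferentiableAt ℝ f y :=
    (hf.eventually (by norm_num)).mono fun y hy => hy.differentiableAt (by norm_num)
  have hf' : HasFDerivAt (fderiv ℝ f) (fderiv ℝ (fderiv ℝ f) x) x :=
    ((hf.fderiv_right (m := 1) (by norm_num)).differentiableAt (by norm_num)).hasFDerivAt
  refine IsLocalMin.nonneg_of_hasDerivAt_of_hasDerivAt (φ := fun t => f (x + t • ξ))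
    (φ' := fun t => fderiv ℝ f (x + t • ξ) ξ) (t₀ := 0) ?_ ?_ ?_
  · exact IsLocalMin.comp_continuous (g := fun t : ℝ => x + t • ξ) (b := 0)
      (by simpa using hmin) (hline 0).continuousAt
  · exact (hcont.eventually hdiff).mono fun t ht => ht.hasFDerivAt.comp_hasDerivAt t (hline t)
  · have hf'0 : HasFDerivAt (fderiv ℝ f) (fderiv ℝ (fderiv ℝ f) x) (x + (0 : ℝ) • ξ) := by
      simpa using hf'
    exact (ContinuousLinearMap.apply ℝ ℝ ξ).hasFDerivAt.comp_hasDerivAt (0 : ℝ)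
      (hf'0.comp_hasDerivAt 0 (hline 0))

end SecondOrder

section Hessian

variable {n : ℕ}

def hessianEntry (f : Eucl n → ℝ) (x : Eucl n) (i j : Fin n) : ℝ :=
  fderiv ℝ (fun y => fderiv ℝ f y (EuclideanSpace.single i 1)) x (EuclideanSpace.single j 1)

/-- `tr(B D²f(x))`, so that `NondivSolution A Ω u` says `∀ x ∈ Ω, nondivOp (A x) u x = 0`. -/
def nondivOp (B : Matrix (Fin n) (Fin n) ℝ) (f : Eucl n → ℝ) (x : Eucl n) : ℝ :=
  ∑ i, ∑ j, B i j * hessianEntry f x i j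

variable {f g : Eucl n → ℝ} {x : Eucl n}

theorem hessianEntry_eq_fderiv_fderiv (hf : ContDiffAt ℝ 2 f x) (i j : Fin n) :
    hessianEntry f x i j =
      fderiv ℝ (fderiv ℝ f) x (EuclideanSpace.single j 1) (EuclideanSpace.single i 1) := by
  have hd : DifferentiableAt ℝ (fderiv ℝ f) x :=
    (hf.fderiv_right (m := 1) (by norm_num)).differentiableAt (by norm_num)
  rw [hessianEntry, fderiv_clm_apply hd (differentiableAt_const _)]
  simp

theorem hessianEntry_comm (hf : ContDiffAt ℝ 2 f x) (i j : Fin n) :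
    hessianEntry f x i j = hessianEntry f x j i := by
  rw [hessianEntry_eq_fderiv_fderiv hf, hessianEntry_eq_fderiv_fderiv hf]
  exact (hf.isSymmSndFDerivAt (by simp)).eq _ _

theorem fderiv_fderiv_apply_self_eq_sum (hf : ContDiffAt ℝ 2 f x) (ξ : Eucl n) :
    fderiv ℝ (fderiv ℝ f) x ξ ξ = ∑ i, ∑ j, ξ i * ξ j * hessianEntry f x i j := by
  have hξ : ξ = ∑ i, ξ i • EuclideanSpace.single i (1 : ℝ) := by
    simpa using ((EuclideanSpace.basisFun (Fin n) ℝ).sum_repr ξ).symm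
  conv_lhs => rw [hξ]
  simp [hessianEntry_eq_fderiv_fderiv hf, Finset.mul_sum, mul_assoc]

open scoped MatrixOrder in
theorem sum_mul_nonneg_of_posSemidef (B M : Matrix (Fin n) (Fin n) ℝ)
    (hB : ∀ ξ : Eucl n, 0 ≤ ∑ i, ξ i * ∑ j, B i j * ξ j) (hM : M.PosSemidef) :
    0 ≤ ∑ i, ∑ j, B i j * M i j := by
  obtain ⟨S, rfl⟩ := CStarAlgebra.nonneg_iff_eq_star_mul_self.mp hM.nonneg
  have hrows : ∑ i, ∑ j, B i j * (star S * S) i j =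
      ∑ k, ∑ i, S k i * ∑ j, B i j * S k j := by
    simp only [Matrix.mul_apply, Matrix.star_apply, star_trivial, Finset.mul_sum]
    symm
    rw [Finset.sum_comm]
    refine Finset.sum_congr rfl fun i _ => ?_
    rw [Finset.sum_comm]
    exact Finset.sum_congr rfl fun j _ => Finset.sum_congr rfl fun k _ => by ring
  rw [hrows]
  exact Finset.sum_nonneg fun k _ => hB (WithLp.toLp 2 (S k))

theorem IsLocalMin.posSemidef_hessianEntry (hf : ContDiffAt ℝ 2 f x) (hmin : IsLocalMin f x) :
    (Matrix.of (hessianEntry f x)).PosSemidef := by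
  refine .of_dotProduct_mulVec_nonneg ?_ fun v => ?_
  · ext i j
    exact hessianEntry_comm hf j i
  · have := hmin.fderiv_fderiv_apply_self_nonneg hf (WithLp.toLp 2 v)
    rw [fderiv_fderiv_apply_self_eq_sum hf] at this
    simpa [dotProduct, Matrix.mulVec, Finset.mul_sum, mul_assoc, mul_comm, mul_left_comm,
      hessianEntry_comm hf] using this

theorem IsLocalMin.nondivOp_nonneg (hf : ContDiffAt ℝ 2 f x) (hmin : IsLocalMin f x)
    {B : Matrix (Fin n) (Fin n) ℝ} (hB : ∀ ξ : Eucl n, 0 ≤ ∑ i, ξ i * ∑ j, B i j * ξ j) :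
    0 ≤ nondivOp B f x :=
  sum_mul_nonneg_of_posSemidef B _ hB (hmin.posSemidef_hessianEntry hf)

theorem hessianEntry_linear_combination (a b c : ℝ) (hf : ContDiffAt ℝ 2 f x)
    (hg : ContDiffAt ℝ 2 g x) (i j : Fin n) :
    hessianEntry (fun y => a * f y + b * g y + c) x i j =
      a * hessianEntry f x i j + b * hessianEntry g x i j := by
  have hd : ∀ {h : Eucl n → ℝ}, ContDiffAt ℝ 2 h x →
      (∀ᶠ y in 𝓝 x, DifferentiableAt ℝ h y) ∧
        DifferentiableAt ℝ (fun y => fderiv ℝ h y (EuclideanSpace.single i 1)) x := fun hh =>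
    ⟨(hh.eventually (by norm_num)).mono fun y hy => hy.differentiableAt (by norm_num),
      ((hh.fderiv_right (m := 1) (by norm_num)).differentiableAt (by norm_num)).clm_apply
        (differentiableAt_const _)⟩
  obtain ⟨hfy, hfx⟩ := hd hf
  obtain ⟨hgy, hgx⟩ := hd hg
  have hev : (fun y => fderiv ℝ (fun t => a * f t + b * g t + c) y (EuclideanSpace.single i 1))
      =ᶠ[𝓝 x] fun y => a * fderiv ℝ f y (EuclideanSpace.single i 1) +
        b * fderiv ℝ g y (EuclideanSpace.single i 1) := by
    filter_upwards [hfy, hgy] with y hfy hgy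
    rw [fderiv_add_const, fderiv_fun_add (hfy.const_mul a) (hgy.const_mul b),
      fderiv_const_mul hfy, fderiv_const_mul hgy]
    simp
  rw [hessianEntry, hev.fderiv_eq, fderiv_fun_add (hfx.const_mul a) (hgx.const_mul b),
    fderiv_const_mul hfx, fderiv_const_mul hgx]
  simp [hessianEntry]

theorem nondivOp_linear_combination (B : Matrix (Fin n) (Fin n) ℝ) (a b c : ℝ)
    (hf : ContDiffAt ℝ 2 f x) (hg : ContDiffAt ℝ 2 g x) :
    nondivOp B (fun y => a * f y + b * g y + c) x = a * nondivOp B f x + b * nondivOp B g x := by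
  simp only [nondivOp, hessianEntry_linear_combination a b c hf hg, Finset.mul_sum,
    ← Finset.sum_add_distrib]
  exact Finset.sum_congr rfl fun i _ => Finset.sum_congr rfl fun j _ => by ring

theorem nonneg_of_nondivOp_neg {D : Set (Eucl n)} (hD : IsOpen D)
    (hDb : Bornology.IsBounded D) {A : Eucl n → Matrix (Fin n) (Fin n) ℝ}
    (hA : ∀ x ∈ D, ∀ ξ : Eucl n, 0 ≤ ∑ i, ξ i * ∑ j, A x i j * ξ j) {V : Eucl n → ℝ}
    (hV : ∀ x ∈ D, ContDiffAt ℝ 2 V x) (hneg : ∀ x ∈ D, nondivOp (A x) V x < 0)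
    (hbdry : ∀ x ∈ frontier D, ∃ l, 0 ≤ l ∧ Tendsto V (𝓝[D] x) (𝓝 l)) :
    ∀ x ∈ D, 0 ≤ V x := by
  intro x₀ hx₀
  by_contra! hV₀
  set S := {y ∈ D | V y ≤ V x₀}
  have hx₀S : x₀ ∈ closure S := subset_closure ⟨hx₀, le_rfl⟩
  -- the sublevel set stays away from `frontier D`, where `V` is eventually above `V x₀ < 0`
  have hSD : closure S ⊆ D := by
    intro y hy
    by_contra hyD
    obtain ⟨l, hl, hlim⟩ := hbdry y ⟨closure_mono (sep_subset _ _) hy, by rwa [hD.interior_eq]⟩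
    have hev : ∀ᶠ z in 𝓝[S] y, V x₀ < V z :=
      nhdsWithin_mono y (sep_subset _ _) (hlim.eventually (lt_mem_nhds (hV₀.trans_le hl)))
    have := mem_closure_iff_nhdsWithin_neBot.mp hy
    obtain ⟨z, hz, hzS⟩ := (hev.and self_mem_nhdsWithin).exists
    exact hzS.2.not_gt hz
  obtain ⟨xm, hxm, hmin⟩ := (hDb.subset (sep_subset _ _)).isCompact_closure.exists_isMinOn
    ⟨x₀, hx₀S⟩ fun y hy => (hV y (hSD hy)).continuousAt.continuousWithinAt
  have hloc : IsLocalMin V xm := by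
    filter_upwards [hD.mem_nhds (hSD hxm)] with y hy
    by_cases hy' : V y ≤ V x₀
    · exact hmin (subset_closure ⟨hy, hy'⟩)
    · exact (hmin hx₀S).trans (not_le.mp hy').le
  exact (hneg xm (hSD hxm)).not_ge (hloc.nondivOp_nonneg (hV xm (hSD hxm)) (hA xm (hSD hxm)))

end Hessian

section Barrier

variable {n : ℕ}

/-- The barrier `|y - z|^{-p}`, written through `‖y - z‖²` so that it is visibly smooth off `z`. -/
def barrier (z : Eucl n) (p : ℝ) (y : Eucl n) : ℝ := (‖y - z‖ ^ 2) ^ (-p / 2)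

variable {z x : Eucl n} {p : ℝ}

theorem hasFDerivAt_norm_sub_sq (z x : Eucl n) :
    HasFDerivAt (fun y : Eucl n => ‖y - z‖ ^ 2) (2 • innerSL ℝ (x - z)) x := by
  simpa using ((hasFDerivAt_id x).sub_const z).norm_sq

theorem barrier_eq_dist_rpow (y : Eucl n) : barrier z p y = dist y z ^ (-p) := by
  rw [barrier, dist_eq_norm, ← Real.rpow_natCast, ← Real.rpow_mul (norm_nonneg _)]
  congr 1
  ring

theorem contDiffAt_barrier (h : x ≠ z) : ContDiffAt ℝ 2 (barrier z p) x :=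
  (contDiffAt_id.sub contDiffAt_const).norm_sq ℝ |>.rpow_const_of_ne
    (by simpa [sub_eq_zero] using h)

theorem fderiv_barrier_apply_single (h : x ≠ z) (i : Fin n) :
    fderiv ℝ (barrier z p) x (EuclideanSpace.single i 1) =
      -p * (x i - z i) * (‖x - z‖ ^ 2) ^ (-p / 2 - 1) := by
  have hQ : ‖x - z‖ ^ 2 ≠ 0 := by simpa [sub_eq_zero] using h
  unfold barrier
  rw [((hasFDerivAt_norm_sub_sq z x).rpow_const (Or.inl hQ)).fderiv]
  simp [EuclideanSpace.inner_single_right]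
  ring

theorem hessianEntry_barrier (h : x ≠ z) (i j : Fin n) :
    hessianEntry (barrier z p) x i j =
      -p * (‖x - z‖ ^ 2) ^ (-p / 2 - 1) * (if i = j then 1 else 0) +
        p * (p + 2) * (x i - z i) * (x j - z j) * (‖x - z‖ ^ 2) ^ (-p / 2 - 2) := by
  have hQ : ‖x - z‖ ^ 2 ≠ 0 := by simpa [sub_eq_zero] using h
  have hev : (fun y => fderiv ℝ (barrier z p) y (EuclideanSpace.single i 1)) =ᶠ[𝓝 x]
      fun y => -p * ((y i - z i) * (‖y - z‖ ^ 2) ^ (-p / 2 - 1)) := by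
    filter_upwards [isOpen_ne.mem_nhds h] with y hy
    rw [fderiv_barrier_apply_single hy]
    ring
  have hcoord :
      HasFDerivAt (fun y : Eucl n => y i - z i) (EuclideanSpace.proj i : Eucl n →L[ℝ] ℝ) x :=
    (EuclideanSpace.proj (𝕜 := ℝ) i).hasFDerivAt.sub_const _
  have hpow := (hasFDerivAt_norm_sub_sq z x).rpow_const (p := -p / 2 - 1) (Or.inl hQ)
  rw [hessianEntry, hev.fderiv_eq, ((hcoord.fun_mul hpow).const_mul (-p)).fderiv]
  simp [EuclideanSpace.inner_single_right, eq_comm]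
  rw [show -p / 2 - 1 - 1 = -p / 2 - 2 by ring]
  split_ifs <;> ring

theorem nondivOp_barrier (h : x ≠ z) (B : Matrix (Fin n) (Fin n) ℝ) :
    nondivOp B (barrier z p) x =
      -p * (‖x - z‖ ^ 2) ^ (-p / 2 - 1) * ∑ i, B i i +
        p * (p + 2) * (‖x - z‖ ^ 2) ^ (-p / 2 - 2) *
          ∑ i, (x i - z i) * ∑ j, B i j * (x j - z j) := by
  simp only [nondivOp, hessianEntry_barrier h, mul_add, Finset.sum_add_distrib, mul_ite, mul_one,
    mul_zero, Finset.sum_ite_eq, Finset.mem_univ, if_true, Finset.mul_sum]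
  congr 1
  · exact Finset.sum_congr rfl fun i _ => by ring
  · exact Finset.sum_congr rfl fun i _ => Finset.sum_congr rfl fun j _ => by ring

theorem diag_le_of_forall_sqrt_le {B : Matrix (Fin n) (Fin n) ℝ} {Lam : ℝ}
    (hB : ∀ ξ : Eucl n, √(∑ i, (∑ j, B i j * ξ j) ^ 2) ≤ Lam * ‖ξ‖) (i : Fin n) :
    B i i ≤ Lam := by
  have h := hB (EuclideanSpace.single i 1)
  simp at h
  calc B i i ≤ |B i i| := le_abs_self _
    _ ≤ √(∑ k, B k i ^ 2) :=
      Real.abs_le_sqrt (Finset.single_le_sum (fun k _ => sq_nonneg (B k i)) (Finset.mem_univ i))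
    _ ≤ Lam := h

theorem nondivOp_barrier_pos {lam Lam : ℝ} (hlam : 0 < lam) (hp : 0 < p)
    (hpn : n * Lam ≤ p * lam) {B : Matrix (Fin n) (Fin n) ℝ}
    (hB : ∀ ξ : Eucl n, lam * ‖ξ‖ ^ 2 ≤ ∑ i, ξ i * ∑ j, B i j * ξ j ∧
      √(∑ i, (∑ j, B i j * ξ j) ^ 2) ≤ Lam * ‖ξ‖) (h : x ≠ z) :
    0 < nondivOp B (barrier z p) x := by
  set Q := ‖x - z‖ ^ 2
  have hQ : 0 < Q := pow_pos (norm_pos_iff.mpr (sub_ne_zero.mpr h)) 2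
  have htr : ∑ i, B i i ≤ n * Lam :=
    (Finset.sum_le_sum fun i _ => diag_le_of_forall_sqrt_le (fun ξ => (hB ξ).2) i).trans
      (by simp)
  have hquad : lam * Q ≤ ∑ i, (x i - z i) * ∑ j, B i j * (x j - z j) := by
    simpa using (hB (x - z)).1
  have hkey : 0 < -p * Q * ∑ i, B i i +
      p * (p + 2) * ∑ i, (x i - z i) * ∑ j, B i j * (x j - z j) := by
    have h1 := mul_le_mul_of_nonneg_left htr (by positivity : 0 ≤ p * Q)
    have h2 := mul_le_mul_of_nonneg_left hquad (by positivity : 0 ≤ p * (p + 2))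
    have h3 := mul_le_mul_of_nonneg_left hpn (by positivity : 0 ≤ p * Q)
    have h4 : 0 < p * Q * lam := by positivity
    nlinarith
  have hQe : Q ^ (-p / 2 - 1) = Q ^ (-p / 2 - 2) * Q := by
    rw [← Real.rpow_add_one hQ.ne']
    ring_nf
  rw [nondivOp_barrier h, hQe]
  calc 0 < Q ^ (-p / 2 - 2) * (-p * Q * ∑ i, B i i +
        p * (p + 2) * ∑ i, (x i - z i) * ∑ j, B i j * (x j - z j)) :=
      mul_pos (Real.rpow_pos_of_pos hQ _) hkey
    _ = _ := by ring

end Barrier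

section Comparison

/-- The value on the sphere `|x - z| = 2ρ` of the barrier normalised to be `1` on `|x - z| = ρ`
and `0` on `|x - z| = 4ρ`. -/
def stepFactor (p : ℝ) : ℝ := ((2 : ℝ) ^ (-p) - (4 : ℝ) ^ (-p)) / (1 - (4 : ℝ) ^ (-p))

variable {p : ℝ}

theorem four_rpow_neg_lt_two_rpow_neg (hp : 0 < p) : (4 : ℝ) ^ (-p) < (2 : ℝ) ^ (-p) :=
  Real.rpow_lt_rpow_of_neg (by norm_num) (by norm_num) (by linarith)

theorem two_rpow_neg_lt_one (hp : 0 < p) : (2 : ℝ) ^ (-p) < 1 :=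
  Real.rpow_lt_one_of_one_lt_of_neg (by norm_num) (by linarith)

theorem stepFactor_pos (hp : 0 < p) : 0 < stepFactor p :=
  div_pos (sub_pos.mpr (four_rpow_neg_lt_two_rpow_neg hp))
    (sub_pos.mpr ((four_rpow_neg_lt_two_rpow_neg hp).trans (two_rpow_neg_lt_one hp)))

theorem stepFactor_lt_one (hp : 0 < p) : stepFactor p < 1 := by
  have h42 := four_rpow_neg_lt_two_rpow_neg hp
  have h21 := two_rpow_neg_lt_one hp
  rw [stepFactor, div_lt_one (by linarith)]
  linarith

theorem stepFactor_mul {ρ : ℝ} (hp : 0 < p) (hρ : 0 < ρ) :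
    stepFactor p * (ρ ^ (-p) - (4 * ρ) ^ (-p)) = (2 * ρ) ^ (-p) - (4 * ρ) ^ (-p) := by
  have h4 : (1 : ℝ) - 4 ^ (-p) ≠ 0 :=
    (sub_pos.mpr ((four_rpow_neg_lt_two_rpow_neg hp).trans (two_rpow_neg_lt_one hp))).ne'
  rw [stepFactor, Real.mul_rpow (by norm_num) hρ.le, Real.mul_rpow (by norm_num) hρ.le]
  field_simp

section Annulus

variable {X : Type*} [PseudoMetricSpace X] {Ω : Set X} {z : X} {r R : ℝ}

theorem IsOpen.inter_annulus (hΩ : IsOpen Ω) : IsOpen (Ω ∩ {y | r < dist y z ∧ dist y z < R}) :=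
  hΩ.inter ((isOpen_lt continuous_const (continuous_id.dist continuous_const)).inter
    (isOpen_lt (continuous_id.dist continuous_const) continuous_const))

theorem frontier_inter_annulus (hΩ : IsOpen Ω) {x : X}
    (hx : x ∈ frontier (Ω ∩ {y | r < dist y z ∧ dist y z < R})) :
    x ∈ closure Ω ∧ r ≤ dist x z ∧ dist x z ≤ R ∧ (x ∈ Ω → dist x z = r ∨ dist x z = R) := by
  rw [hΩ.inter_annulus.frontier_eq] at hx
  obtain ⟨hcl, hnot⟩ := hx
  have hK : IsClosed {y | r ≤ dist y z ∧ dist y z ≤ R} :=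
    (isClosed_le continuous_const (continuous_id.dist continuous_const)).inter
      (isClosed_le (continuous_id.dist continuous_const) continuous_const)
  obtain ⟨hΩx, hA⟩ := closure_inter_subset_inter_closure _ _ hcl
  have hrR : r ≤ dist x z ∧ dist x z ≤ R :=
    closure_minimal (fun y (hy : r < dist y z ∧ dist y z < R) =>
      (⟨hy.1.le, hy.2.le⟩ : r ≤ dist y z ∧ dist y z ≤ R)) hK hA
  refine ⟨hΩx, hrR.1, hrR.2, fun hxΩ => ?_⟩
  by_contra! hne
  exact hnot ⟨hxΩ, lt_of_le_of_ne hrR.1 hne.1.symm, lt_of_le_of_ne hrR.2 hne.2⟩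

end Annulus

variable {n : ℕ} {lam Lam p : ℝ} {Ω : Set (Eucl n)} {A : Eucl n → Matrix (Fin n) (Fin n) ℝ}
  {w : Eucl n → ℝ} {z : Eucl n} {ρ a m : ℝ}

theorem barrier_comparison (hlam : 0 < lam) (hp : 0 < p) (hpn : n * Lam ≤ p * lam)
    (hΩ : IsOpen Ω) (hA : UnifElliptic lam Lam Ω A) (hw : NondivSolution A Ω w) (hρ : 0 < ρ)
    (hvanish : ∀ x ∈ closedBall z (4 * ρ) ∩ frontier Ω, Tendsto w (𝓝[Ω] x) (𝓝 0))
    (ha : 0 < a) (ham : a ≤ m) (h4 : ∀ x ∈ closedBall z (4 * ρ) ∩ Ω, 0 ≤ w x + m)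
    (h1 : ∀ x ∈ closedBall z ρ ∩ Ω, a ≤ w x + m) {x : Eucl n} (hx : x ∈ Ω)
    (hρx : ρ < dist x z) (hx4 : dist x z < 4 * ρ) :
    a * (barrier z p x - (4 * ρ) ^ (-p)) ≤ (ρ ^ (-p) - (4 * ρ) ^ (-p)) * (w x + m) := by
  set k := ρ ^ (-p) - (4 * ρ) ^ (-p)
  have hk : 0 < k := sub_pos.mpr (Real.rpow_lt_rpow_of_neg hρ (by linarith) (by linarith))
  set D := Ω ∩ {y | ρ < dist y z ∧ dist y z < 4 * ρ}
  set V := fun y => k * w y + -a * barrier z p y + (k * m + a * (4 * ρ) ^ (-p))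
  have hne : ∀ {y}, ρ ≤ dist y z → y ≠ z := fun hy h => by
    rw [h, dist_self] at hy; linarith
  have hβ : ∀ {y}, ρ ≤ dist y z → barrier z p y ≤ ρ ^ (-p) := fun hy => by
    rw [barrier_eq_dist_rpow]; exact Real.rpow_le_rpow_of_nonpos hρ hy (by linarith)
  have hwC : ∀ {y}, y ∈ Ω → ContDiffAt ℝ 2 w y := fun hy => hw.1.contDiffAt (hΩ.mem_nhds hy)
  have hVC : ∀ {y}, y ∈ Ω → ρ ≤ dist y z → ContDiffAt ℝ 2 V y := fun hy hyz =>
    ((contDiffAt_const.mul (hwC hy)).add (contDiffAt_const.mul (contDiffAt_barrier (hne hyz)))).add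
      contDiffAt_const
  suffices ∀ y ∈ D, 0 ≤ V y by linarith [this x ⟨hx, hρx, hx4⟩]
  refine nonneg_of_nondivOp_neg hΩ.inter_annulus
    (isBounded_ball.subset fun y hy => mem_ball.mpr hy.2.2)
    (fun y hy ξ => ((hA y hy.1 ξ).1).trans' (by positivity)) (fun y hy => hVC hy.1 hy.2.1.le)
    (fun y hy => ?_) (fun y hy => ?_)
  · have hL : nondivOp (A y) w y = 0 := hw.2 y hy.1
    rw [nondivOp_linear_combination _ _ _ _ (hwC hy.1) (contDiffAt_barrier (hne hy.2.1.le)), hL]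
    nlinarith [nondivOp_barrier_pos hlam hp hpn (hA y hy.1) (hne hy.2.1.le)]
  · obtain ⟨hcl, hr, hR, hsphere⟩ := frontier_inter_annulus hΩ hy
    by_cases hyΩ : y ∈ Ω
    · refine ⟨V y, ?_, (hVC hyΩ hr).continuousAt.tendsto.mono_left nhdsWithin_le_nhds⟩
      have hwm := h4 y ⟨mem_closedBall.mpr hR, hyΩ⟩
      rcases hsphere hyΩ with hd | hd
      · have hwa := h1 y ⟨mem_closedBall.mpr hd.le, hyΩ⟩
        simp only [V, barrier_eq_dist_rpow, hd]
        nlinarith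
      · simp only [V, barrier_eq_dist_rpow, hd]
        nlinarith
    · have hw0 : Tendsto w (𝓝[D] y) (𝓝 0) :=
        (hvanish y ⟨mem_closedBall.mpr hR, hcl, by rwa [hΩ.interior_eq]⟩).mono_left
          (nhdsWithin_mono _ inter_subset_left)
      refine ⟨k * 0 + -a * barrier z p y + (k * m + a * (4 * ρ) ^ (-p)), ?_,
        ((tendsto_const_nhds.mul hw0).add (tendsto_const_nhds.mul
          ((contDiffAt_barrier (hne hr)).continuousAt.tendsto.mono_left nhdsWithin_le_nhds))).add
          tendsto_const_nhds⟩
      nlinarith [mul_le_mul_of_nonneg_left (hβ hr) ha.le, mul_le_mul_of_nonneg_left ham hk.le]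

theorem stepFactor_mul_le (hlam : 0 < lam) (hp : 0 < p) (hpn : n * Lam ≤ p * lam)
    (hΩ : IsOpen Ω) (hA : UnifElliptic lam Lam Ω A) (hw : NondivSolution A Ω w) (hρ : 0 < ρ)
    (hvanish : ∀ x ∈ closedBall z (4 * ρ) ∩ frontier Ω, Tendsto w (𝓝[Ω] x) (𝓝 0))
    (ha : 0 ≤ a) (ham : a ≤ m) (h4 : ∀ x ∈ closedBall z (4 * ρ) ∩ Ω, 0 ≤ w x + m)
    (h1 : ∀ x ∈ closedBall z ρ ∩ Ω, a ≤ w x + m) :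
    ∀ x ∈ closedBall z (2 * ρ) ∩ Ω, stepFactor p * a ≤ w x + m := by
  rintro x ⟨hx2, hx⟩
  rcases ha.eq_or_lt with rfl | ha
  · simpa using h4 x ⟨closedBall_subset_closedBall (by linarith) hx2, hx⟩
  by_cases hxρ : dist x z ≤ ρ
  · exact (mul_le_of_le_one_left ha.le (stepFactor_lt_one hp).le).trans (h1 x ⟨hxρ, hx⟩)
  rw [not_le] at hxρ
  have hcmp := barrier_comparison hlam hp hpn hΩ hA hw hρ hvanish ha ham h4 h1 hx hxρ
    (by linarith [mem_closedBall.mp hx2])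
  have hβ : (2 * ρ) ^ (-p) ≤ barrier z p x := by
    rw [barrier_eq_dist_rpow]
    exact Real.rpow_le_rpow_of_nonpos (hρ.trans hxρ) hx2 (by linarith)
  have hk : 0 < ρ ^ (-p) - (4 * ρ) ^ (-p) :=
    sub_pos.mpr (Real.rpow_lt_rpow_of_neg hρ (by linarith) (by linarith))
  refine le_of_mul_le_mul_right ?_ hk
  calc stepFactor p * a * (ρ ^ (-p) - (4 * ρ) ^ (-p))
      = a * ((2 * ρ) ^ (-p) - (4 * ρ) ^ (-p)) := by rw [← stepFactor_mul hp hρ]; ring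
    _ ≤ a * (barrier z p x - (4 * ρ) ^ (-p)) := by gcongr
    _ ≤ (w x + m) * (ρ ^ (-p) - (4 * ρ) ^ (-p)) := by linarith

end Comparison

section Cylinder

variable {d : ℕ}

@[simp] theorem ehead_sub (x y : Eucl (d + 1)) : ehead (x - y) = ehead x - ehead y := rfl

@[simp] theorem elast_sub (x y : Eucl (d + 1)) : elast (x - y) = elast x - elast y := rfl

@[simp] theorem ehead_add_single_last (x : Eucl (d + 1)) (c : ℝ) :
    ehead (x + EuclideanSpace.single (Fin.last d) c) = ehead x := by
  ext i
  simp [ehead]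

@[simp] theorem elast_add_single_last (x : Eucl (d + 1)) (c : ℝ) :
    elast (x + EuclideanSpace.single (Fin.last d) c) = elast x + c := by
  simp [elast]

theorem norm_ehead_le (v : Eucl (d + 1)) : ‖ehead v‖ ≤ ‖v‖ := by
  rw [EuclideanSpace.norm_eq, EuclideanSpace.norm_eq, Fin.sum_univ_castSucc]
  exact Real.sqrt_le_sqrt (le_add_of_nonneg_right (sq_nonneg _))

theorem abs_elast_le (v : Eucl (d + 1)) : |elast v| ≤ ‖v‖ :=
  PiLp.norm_apply_le v (Fin.last d)

theorem norm_ehead_le_add_dist (x y : Eucl (d + 1)) : ‖ehead x‖ ≤ ‖ehead y‖ + dist x y := by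
  calc ‖ehead x‖ ≤ ‖ehead y‖ + ‖ehead x - ehead y‖ := norm_le_insert' _ _
    _ ≤ ‖ehead y‖ + dist x y := by
      rw [dist_eq_norm, ← ehead_sub]
      exact (add_le_add_iff_left _).mpr (norm_ehead_le _)

theorem continuous_ehead : Continuous (ehead (d := d)) :=
  LipschitzWith.continuous (K := 1) <| .of_dist_le_mul fun x y => by
    simpa [dist_eq_norm] using norm_ehead_le (x - y)

variable {g : Eucl d → ℝ} {L : ℝ}

@[simp] theorem hG_add_single_last (x : Eucl (d + 1)) (c : ℝ) :
    hG g (x + EuclideanSpace.single (Fin.last d) c) = hG g x + c := by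
  simp [hG]
  ring

section Lipschitz

variable (hglip : ∀ x' ∈ ball (0 : Eucl d) 1, ∀ y' ∈ ball (0 : Eucl d) 1,
  |g x' - g y'| ≤ L * ‖x' - y'‖)
include hglip

theorem abs_hG_sub_le (hL : 0 ≤ L) {x y : Eucl (d + 1)} (hx : ‖ehead x‖ < 1)
    (hy : ‖ehead y‖ < 1) : |hG g x - hG g y| ≤ (1 + L) * dist x y := by
  have hg := hglip _ (mem_ball_zero_iff.mpr hx) _ (mem_ball_zero_iff.mpr hy)
  have hhead : ‖ehead x - ehead y‖ ≤ dist x y := by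
    simpa [dist_eq_norm] using norm_ehead_le (x - y)
  have hlast : |elast x - elast y| ≤ dist x y := by
    simpa [dist_eq_norm] using abs_elast_le (x - y)
  calc |hG g x - hG g y| = |(elast x - elast y) - (g (ehead x) - g (ehead y))| := by
        rw [hG, hG]; ring_nf
    _ ≤ |elast x - elast y| + |g (ehead x) - g (ehead y)| := abs_sub _ _
    _ ≤ dist x y + L * dist x y := add_le_add hlast (hg.trans (by gcongr))
    _ = (1 + L) * dist x y := by ring

theorem norm_ehead_lt_and_abs_hG_sub_le (hL : 0 ≤ L) {r δ c : ℝ} {x₀ x : Eucl (d + 1)}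
    (hr : r ≤ 1) (hx₀ : ‖ehead x₀‖ < r - δ)
    (hx : dist x (x₀ + EuclideanSpace.single (Fin.last d) c) ≤ δ) :
    ‖ehead x‖ < r ∧ |hG g x - (hG g x₀ + c)| ≤
      (1 + L) * dist x (x₀ + EuclideanSpace.single (Fin.last d) c) := by
  have hhead : ‖ehead x‖ < r := by
    have := norm_ehead_le_add_dist x (x₀ + EuclideanSpace.single (Fin.last d) c)
    rw [ehead_add_single_last] at this
    linarith
  have hx₀1 : ‖ehead (x₀ + EuclideanSpace.single (Fin.last d) c)‖ < 1 := by
    rw [ehead_add_single_last]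
    linarith [dist_nonneg.trans hx]
  exact ⟨hhead, by simpa using abs_hG_sub_le hglip hL (hhead.trans_le hr) hx₀1⟩

theorem continuousOn_hG : ContinuousOn (hG g) {x : Eucl (d + 1) | ‖ehead x‖ < 1} := by
  have hg : ContinuousOn g (ball 0 1) := (LipschitzOnWith.of_dist_le' (K := L) fun x hx y hy => by
    simpa [Real.dist_eq, dist_eq_norm] using hglip x hx y hy).continuousOn
  have hgh : ContinuousOn (fun x : Eucl (d + 1) => g (ehead x)) {x | ‖ehead x‖ < 1} :=
    hg.comp continuous_ehead.continuousOn fun x hx => mem_ball_zero_iff.mpr hx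
  exact (EuclideanSpace.proj (𝕜 := ℝ) (Fin.last d)).continuous.continuousOn.sub hgh

theorem isOpen_cylC {r ρ : ℝ} (hr : r ≤ 1) : IsOpen (cylC g r ρ) := by
  have hU : IsOpen {x : Eucl (d + 1) | ‖ehead x‖ < r} :=
    isOpen_lt continuous_ehead.norm continuous_const
  have hcyl : cylC g r ρ = {x | ‖ehead x‖ < r} ∩ hG g ⁻¹' Ioo 0 ρ := rfl
  rw [hcyl]
  exact ((continuousOn_hG hglip).mono fun x (hx : ‖ehead x‖ < r) => hx.trans_le hr)
    |>.isOpen_inter_preimage hU isOpen_Ioo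

theorem elast_eq_of_mem_frontier_cylC {x : Eucl (d + 1)} (hx : x ∈ frontier (cylC g 1 1))
    (hhead : ‖ehead x‖ < 1) (htop : hG g x < 1) : elast x = g (ehead x) := by
  have hΩ := isOpen_cylC hglip (ρ := 1) le_rfl
  rw [hΩ.frontier_eq] at hx
  have := mem_closure_iff_nhdsWithin_neBot.mp hx.1
  have hnonneg : 0 ≤ hG g x :=
    ge_of_tendsto (((continuousOn_hG hglip).continuousAt
      ((isOpen_lt continuous_ehead.norm continuous_const).mem_nhds hhead)).tendsto.mono_left
        nhdsWithin_le_nhds)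
      (eventually_nhdsWithin_of_forall fun y (hy : y ∈ cylC g 1 1) => hy.2.1.le)
  have hzero : hG g x = 0 := by
    by_contra hne
    exact hx.2 ⟨hhead, lt_of_le_of_ne hnonneg (Ne.symm hne), htop⟩
  simpa [hG, sub_eq_zero] using hzero

end Lipschitz

end Cylinder

theorem pow_mul_le_of_chain {X : Type*} [PseudoMetricSpace X] {Ω : Set X} {u : X → ℝ}
    {z : ℕ → X} {ρ θ m : ℝ} (hθ : 0 ≤ θ) (hθ1 : θ ≤ 1) (hm : 0 ≤ m)
    (hz : ∀ j, dist (z (j + 1)) (z j) ≤ ρ)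
    (hstep : ∀ j a, 0 ≤ a → a ≤ m → (∀ x ∈ closedBall (z j) ρ ∩ Ω, a ≤ u x) →
      ∀ x ∈ closedBall (z j) (2 * ρ) ∩ Ω, θ * a ≤ u x)
    (hbase : ∀ x ∈ closedBall (z 0) ρ ∩ Ω, m ≤ u x) (j : ℕ) :
    ∀ x ∈ closedBall (z j) ρ ∩ Ω, θ ^ j * m ≤ u x := by
  induction j with
  | zero => simpa using hbase
  | succ j ih =>
    rintro x ⟨hx, hxΩ⟩
    rw [pow_succ', mul_assoc]
    refine hstep j _ (by positivity) (mul_le_of_le_one_left hm (pow_le_one₀ hθ hθ1)) ih x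
      ⟨?_, hxΩ⟩
    calc dist x (z j) ≤ dist x (z (j + 1)) + dist (z (j + 1)) (z j) := dist_triangle _ _ _
      _ ≤ 2 * ρ := by linarith [mem_closedBall.mp hx, hz j]

theorem stepFactor_pow_mul_le {d : ℕ} {lam Lam L p δ r m : ℝ} (hlam : 0 < lam) (hp : 0 < p)
    (hpn : ((d + 1 : ℕ) : ℝ) * Lam ≤ p * lam) (hL : 0 ≤ L) {g : Eucl d → ℝ}
    (hglip : ∀ x' ∈ ball (0 : Eucl d) 1, ∀ y' ∈ ball (0 : Eucl d) 1,
      |g x' - g y'| ≤ L * ‖x' - y'‖)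
    {A : Eucl (d + 1) → Matrix (Fin (d + 1)) (Fin (d + 1)) ℝ}
    (hA : UnifElliptic lam Lam (cylC g 1 1) A) {w : Eucl (d + 1) → ℝ}
    (hw : NondivSolution A (cylC g 1 1) w) (hvG : VanishesOnGraph g 1 (cylC g 1 1) w)
    (hδ : 0 < δ) (hδ4 : δ ≤ 1 / 4) (hpos : ∀ x ∈ cylC g 1 1 \ cylC g 1 δ, 0 ≤ w x)
    (hr : r ≤ 1) (hm : 0 ≤ m) (hlow : ∀ x ∈ cylC g r 1, 0 ≤ w x + m) {x₀ : Eucl (d + 1)}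
    (hx₀ : x₀ ∈ cylC g (r - δ) δ) :
    stepFactor p ^ ⌈10 * (1 + L)⌉₊ * m ≤ w x₀ + m := by
  obtain ⟨hx₀r, hx₀0, hx₀δ⟩ := hx₀
  set ρ := δ / (8 * (1 + L))
  have hρ : 0 < ρ := by positivity
  have hLρ : (1 + L) * ρ = δ / 8 := by simp only [ρ]; field_simp
  -- the centres descend from height `5δ/4` above `x₀`, where `h_Γ > δ` and so `w ≥ 0`, to `x₀`
  set c : ℕ → ℝ := fun j => max (5 * δ / 4 - j * ρ) 0
  have hc : ∀ j, 0 ≤ c j ∧ c j ≤ 5 * δ / 4 := fun j =>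
    ⟨le_max_right _ _, max_le (by nlinarith [(j.cast_nonneg : (0 : ℝ) ≤ j)]) (by positivity)⟩
  set z : ℕ → Eucl (d + 1) := fun j => x₀ + EuclideanSpace.single (Fin.last d) (c j)
  have hgeom : ∀ j, ∀ x ∈ closedBall (z j) (4 * ρ),
      ‖ehead x‖ < r ∧ |hG g x - (hG g x₀ + c j)| ≤ (1 + L) * dist x (z j) := fun j x hx =>
    norm_ehead_lt_and_abs_hG_sub_le hglip hL hr hx₀r
      ((mem_closedBall.mp hx).trans (by nlinarith))
  have hΩ := isOpen_cylC hglip (ρ := 1) le_rfl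
  set N := ⌈10 * (1 + L)⌉₊
  have hzN : z N = x₀ := by
    have : 5 * δ / 4 ≤ N * ρ := by
      nlinarith [Nat.le_ceil (10 * (1 + L))]
    simp [z, c, max_eq_right (sub_nonpos.mpr this)]
  refine pow_mul_le_of_chain (Ω := cylC g 1 1) (u := fun x => w x + m) (z := z) (ρ := ρ)
    (stepFactor_pos hp).le (stepFactor_lt_one hp).le hm (fun j => ?_) (fun j a ha ham h1 => ?_)
    (fun x hx => ?_) N x₀ ⟨by simp [hzN, hρ.le], hx₀r.trans_le (by linarith), hx₀0, by linarith⟩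
  · simp only [z, dist_add_left, PiLp.dist_single_same, Real.dist_eq]
    refine (abs_max_sub_max_le_abs _ _ _).trans ?_
    push_cast
    rw [show 5 * δ / 4 - (j + 1) * ρ - (5 * δ / 4 - j * ρ) = -ρ by ring, abs_neg, abs_of_pos hρ]
  · refine stepFactor_mul_le hlam hp hpn hΩ hA hw hρ ?_ ha ham ?_ h1
    · rintro x ⟨hx, hxfr⟩
      obtain ⟨hhead, hdiff⟩ := hgeom j x hx
      have htop : hG g x < 1 := by
        nlinarith [(abs_le.mp hdiff).2, (hc j).2, mem_closedBall.mp hx]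
      exact hvG x (hhead.trans_le hr)
        (elast_eq_of_mem_frontier_cylC hglip hxfr (hhead.trans_le hr) htop)
    · rintro x ⟨hx, hxΩ⟩
      exact hlow x ⟨(hgeom j x hx).1, hxΩ.2.1, hxΩ.2.2⟩
  · obtain ⟨hx, hxΩ⟩ := hx
    obtain ⟨-, hdiff⟩ := hgeom 0 x (closedBall_subset_closedBall (by linarith) hx)
    have hc0 : c 0 = 5 * δ / 4 := by simp only [c]; simp; positivity
    have hhigh : δ ≤ hG g x := by
      nlinarith [(abs_le.mp hdiff).1, mem_closedBall.mp hx]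
    simpa using hpos x ⟨hxΩ, fun h => h.2.2.not_ge hhigh⟩

theorem neg_pow_le_of_mem_cylC {d : ℕ} {lam Lam L p δ : ℝ} (hlam : 0 < lam) (hp : 0 < p)
    (hpn : ((d + 1 : ℕ) : ℝ) * Lam ≤ p * lam) (hL : 0 ≤ L) {g : Eucl d → ℝ}
    (hglip : ∀ x' ∈ ball (0 : Eucl d) 1, ∀ y' ∈ ball (0 : Eucl d) 1,
      |g x' - g y'| ≤ L * ‖x' - y'‖)
    {A : Eucl (d + 1) → Matrix (Fin (d + 1)) (Fin (d + 1)) ℝ}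
    (hA : UnifElliptic lam Lam (cylC g 1 1) A) {w : Eucl (d + 1) → ℝ}
    (hw : NondivSolution A (cylC g 1 1) w) (hvG : VanishesOnGraph g 1 (cylC g 1 1) w)
    (hδ : 0 < δ) (hδ4 : δ ≤ 1 / 4) (hneg : ∀ x ∈ cylC g 1 1, -1 ≤ w x)
    (hpos : ∀ x ∈ cylC g 1 1 \ cylC g 1 δ, 0 ≤ w x) (k : ℕ) :
    ∀ x ∈ cylC g (1 - k * δ) 1, -(1 - stepFactor p ^ ⌈10 * (1 + L)⌉₊) ^ k ≤ w x := by
  set c₀ := stepFactor p ^ ⌈10 * (1 + L)⌉₊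
  have hc₀ : c₀ ≤ 1 := pow_le_one₀ (stepFactor_pos hp).le (stepFactor_lt_one hp).le
  induction k with
  | zero => simpa using hneg
  | succ k ih =>
    intro x hx
    push_cast at hx
    have hmk : 0 ≤ (1 - c₀) ^ k := pow_nonneg (by linarith) k
    rw [pow_succ]
    by_cases hxδ : hG g x < δ
    · have := stepFactor_pow_mul_le hlam hp hpn hL hglip hA hw hvG hδ hδ4 hpos
        (r := 1 - k * δ) (sub_le_self _ (by positivity)) hmk (fun y hy => by linarith [ih y hy])
        (x₀ := x) ⟨by linarith [hx.1], hx.2.1, hxδ⟩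
      nlinarith
    · have := hpos x ⟨⟨hx.1.trans_le (by nlinarith), hx.2.1, hx.2.2⟩, fun h => hxδ h.2.2⟩
      nlinarith

theorem geometric_decay_negative_part_general (d : ℕ) (lam Lam L : ℝ)
    (hlam : 0 < lam) (hlL : lam ≤ Lam) (hL : 0 < L) :
    ∃ c₀ : ℝ, 0 < c₀ ∧ c₀ < 1 ∧
      ∀ δ : ℝ, 0 < δ → δ ≤ 1 / 4 →
      ∀ g : Eucl d → ℝ, g 0 = 0 →
        (∀ x' ∈ ball (0 : Eucl d) 1, ∀ y' ∈ ball (0 : Eucl d) 1,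
          |g x' - g y'| ≤ L * ‖x' - y'‖) →
        ∀ A : Eucl (d + 1) → Matrix (Fin (d + 1)) (Fin (d + 1)) ℝ,
          UnifElliptic lam Lam (cylC g 1 1) A →
          ∀ w : Eucl (d + 1) → ℝ,
            NondivSolution A (cylC g 1 1) w → VanishesOnGraph g 1 (cylC g 1 1) w →
            (∀ x ∈ cylC g 1 1, -1 ≤ w x) →
            (∀ x ∈ cylC g 1 1 \ cylC g 1 δ, 0 ≤ w x) →
            (∀ k : ℕ, 1 ≤ k → (k : ℝ) * δ ≤ 1 / 2 →
              ∀ x ∈ cylC g (1 - k * δ) (1 - k * δ), -(1 - c₀) ^ k ≤ w x) ∧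
            (∀ x ∈ cylC g (1 / 2) (1 / 2),
              -(1 - c₀) ^ (⌊1 / (4 * δ)⌋₊) ≤ w x) := by
  set p := ((d + 1 : ℕ) : ℝ) * Lam / lam
  have hp : 0 < p := by have := hlam.trans_le hlL; positivity
  have hpn : ((d + 1 : ℕ) : ℝ) * Lam ≤ p * lam := (div_mul_cancel₀ _ hlam.ne').ge
  refine ⟨stepFactor p ^ ⌈10 * (1 + L)⌉₊, pow_pos (stepFactor_pos hp) _,
    pow_lt_one₀ (stepFactor_pos hp).le (stepFactor_lt_one hp)
      (Nat.ceil_pos.mpr (by positivity)).ne', ?_⟩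
  intro δ hδ hδ4 g _ hglip A hA w hw hvG hneg hpos
  have hdecay := neg_pow_le_of_mem_cylC hlam hp hpn hL.le hglip hA hw hvG hδ hδ4 hneg hpos
  refine ⟨fun k _ _ x hx => hdecay k x ⟨hx.1, hx.2.1, hx.2.2.trans_le ?_⟩, fun x hx => ?_⟩
  · nlinarith [(k.cast_nonneg : (0 : ℝ) ≤ k)]
  · have hk : (⌊1 / (4 * δ)⌋₊ : ℝ) * δ ≤ 1 / 4 := by
      calc (⌊1 / (4 * δ)⌋₊ : ℝ) * δ ≤ 1 / (4 * δ) * δ := by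
            gcongr; exact Nat.floor_le (by positivity)
        _ = 1 / 4 := by field_simp
    exact hdecay _ x ⟨by linarith [hx.1], hx.2.1, by linarith [hx.2.2]⟩

/-- **Geometric decay of the negative part near a Lipschitz graph** (inequality (2.4)
in Step 1): there is a universal constant `c₀ ∈ (0,1)` such that for every
`δ ∈ (0, 1/4]`, if `w` solves `tr(A D²w) = 0` in `C_1`, vanishes continuously on `Γ`,
`w ≥ -1` on `C_1` and `w ≥ 0` on `C_1 \ C(1,δ)`, then `w ≥ -(1-c₀)^k` on `C_{1-kδ}`
for every positive integer `k` with `kδ ≤ 1/2`; in particular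
`w ≥ -(1-c₀)^⌊1/(4δ)⌋` on `C_{1/2}`. -/
theorem geometric_decay_negative_part (d : ℕ) (hd : 1 ≤ d) (lam Lam L : ℝ)
    (hlam : 0 < lam) (hlL : lam ≤ Lam) (hL : 0 < L) :
    ∃ c₀ : ℝ, 0 < c₀ ∧ c₀ < 1 ∧
      ∀ δ : ℝ, 0 < δ → δ ≤ 1 / 4 →
      ∀ g : Eucl d → ℝ, g 0 = 0 →
        (∀ x' ∈ ball (0 : Eucl d) 1, ∀ y' ∈ ball (0 : Eucl d) 1,
          |g x' - g y'| ≤ L * ‖x' - y'‖) →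
        ∀ A : Eucl (d + 1) → Matrix (Fin (d + 1)) (Fin (d + 1)) ℝ,
          UnifElliptic lam Lam (cylC g 1 1) A →
          ∀ w : Eucl (d + 1) → ℝ,
            NondivSolution A (cylC g 1 1) w → VanishesOnGraph g 1 (cylC g 1 1) w →
            (∀ x ∈ cylC g 1 1, -1 ≤ w x) →
            (∀ x ∈ cylC g 1 1 \ cylC g 1 δ, 0 ≤ w x) →
            (∀ k : ℕ, 1 ≤ k → (k : ℝ) * δ ≤ 1 / 2 →
              ∀ x ∈ cylC g (1 - k * δ) (1 - k * δ), -(1 - c₀) ^ k ≤ w x) ∧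
            (∀ x ∈ cylC g (1 / 2) (1 / 2),
              -(1 - c₀) ^ (⌊1 / (4 * δ)⌋₊) ≤ w x) :=
  geometric_decay_negative_part_general d lam Lam L hlam hlL hL

end
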